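/- arXiv:1310.2337 — 4 statements merged into one kernel-verified Lean document; each statement's English description precedes it below -/
import Mathlib

section
/- Let α ∈ ℝ, ε > 0, and let μ = (μ_{ij}) be a d×d matrix of finite signed Borel measures on [0,∞) with ∫_{[0,∞)} e^{−(α−ε) s} d|μ_{ij}|(s) < ∞ for all i,j. Let λ_1, …, λ_N ∈ ℂ with Re(λ_j) = α for each j, and let K_1, …, K_N ∈ ℂ^{d×d} satisfy (λ_j I_d − μ̂(λ_j)) K_j = 0 for each j, where μ̂(λ)_{ik} = ∫_{[0,∞)} e^{−λ s} dμ_{ik}(s). Let r : [0,∞) → ℝ^{d×d} be differentiable with r′(t) = ∫_{[0,t]} μ(ds) r(t−s) for t ≥ 0, set S(t) = Σ_{j=1}^N e^{λ_j t} K_j and R(t) = r(t) − S(t), and suppose there is M > 0 with ‖R(t)‖ ≤ M e^{(α−ε) t} for all t ≥ 0. Then R′(t) = O(e^{(α−ε) t}) as t → ∞. -/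
open MeasureTheory Set Filter Matrix

/-- Integral of a vector-valued function against a finite signed Borel measure on a set,
via the Jordan decomposition. -/
noncomputable def sInt {E : Type*} [NormedAddCommGroup E] [NormedSpace ℝ E]
    (μ : MeasureTheory.SignedMeasure ℝ) (A : Set ℝ) (f : ℝ → E) : E :=
  (∫ s in A, f s ∂μ.toJordanDecomposition.posPart) -
    ∫ s in A, f s ∂μ.toJordanDecomposition.negPart

/-- Frobenius norm of a complex matrix. -/
noncomputable def frobC {d e : ℕ} (A : Matrix (Fin d) (Fin e) ℂ) : ℝ :=
  Real.sqrt (∑ i, ∑ j, ‖A i j‖ ^ 2)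

/-- The Laplace transform `μ̂(λ)` of a `d × d` matrix of finite signed Borel measures
supported on `[0,∞)`. -/
noncomputable def muHat {d : ℕ} (μ : Matrix (Fin d) (Fin d) (MeasureTheory.SignedMeasure ℝ))
    (lam : ℂ) : Matrix (Fin d) (Fin d) ℂ :=
  Matrix.of fun i j => sInt (μ i j) (Ici 0) (fun s => Complex.exp (-(lam * s)))

/-- The convolution `∫_{[0,t]} μ(ds) r(t−s)`. -/
noncomputable def measConv {d : ℕ}
    (μ : Matrix (Fin d) (Fin d) (MeasureTheory.SignedMeasure ℝ))
    (r : ℝ → Matrix (Fin d) (Fin d) ℝ) (t : ℝ) : Matrix (Fin d) (Fin d) ℝ :=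
  Matrix.of fun i k => ∑ j, sInt (μ i j) (Icc 0 t) (fun s => r (t - s) j k)

/-!
The characteristic equation `λ_j K_j = μ̂(λ_j) K_j` says that each term of
`S(t) = Σ_j e^{λ_j t} K_j` solves the convolution equation over the whole half-line:
`λ_j e^{λ_j t} K_j = ∫_{[0,∞)} μ(ds) e^{λ_j (t-s)} K_j`. Subtracting this from
`r'(t) = ∫_{[0,t]} μ(ds) r(t-s)` gives
`R'(t) = ∫_{[0,t]} μ(ds) R(t-s) - Σ_j ∫_{(t,∞)} μ(ds) e^{λ_j (t-s)} K_j`.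
Both integrands are bounded by a constant times `e^{(α-ε)(t-s)}`: the first by the hypothesis on
`R`, the second because `|e^{λ_j u}| = e^{αu} ≤ e^{(α-ε)u}` for `u ≤ 0`. Integrating
`e^{-(α-ε)s}` against `|μ|` then gives `‖R'(t)‖ ≤ C e^{(α-ε)t}`.
-/

open scoped Real Complex Matrix.Norms.Frobenius

namespace MeasureTheory.SignedMeasure

variable (ν : SignedMeasure ℝ)

lemma posPart_le_totalVariation : ν.toJordanDecomposition.posPart ≤ ν.totalVariation :=
  Measure.le_add_right le_rfl

lemma negPart_le_totalVariation : ν.toJordanDecomposition.negPart ≤ ν.totalVariation :=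
  Measure.le_add_left le_rfl

end MeasureTheory.SignedMeasure

section sInt

open SignedMeasure

variable {E : Type*} [NormedAddCommGroup E] [NormedSpace ℝ E] (ν : SignedMeasure ℝ)

lemma norm_sInt_le {A : Set ℝ} (hA : MeasurableSet A) {f : ℝ → E} {g : ℝ → ℝ}
    (hg : IntegrableOn g A ν.totalVariation) (hfg : ∀ s ∈ A, ‖f s‖ ≤ g s) :
    ‖sInt ν A f‖ ≤ ∫ s in A, g s ∂ν.totalVariation := by
  set P := ν.toJordanDecomposition.posPart
  set Q := ν.toJordanDecomposition.negPart
  have hfg' : ∀ ρ : Measure ℝ, ∀ᵐ s ∂ρ.restrict A, ‖f s‖ ≤ g s := fun ρ =>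
    (ae_restrict_iff' hA).2 (ae_of_all _ hfg)
  have hgP : IntegrableOn g A P := hg.mono_measure (posPart_le_totalVariation ν)
  have hgQ : IntegrableOn g A Q := hg.mono_measure (negPart_le_totalVariation ν)
  calc ‖sInt ν A f‖ ≤ ‖∫ s in A, f s ∂P‖ + ‖∫ s in A, f s ∂Q‖ := norm_sub_le _ _
    _ ≤ (∫ s in A, g s ∂P) + ∫ s in A, g s ∂Q :=
      add_le_add (norm_integral_le_of_norm_le hgP (hfg' P))
        (norm_integral_le_of_norm_le hgQ (hfg' Q))
    _ = ∫ s in A, g s ∂ν.totalVariation := by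
      rw [← integral_add_measure hgP hgQ, ← Measure.restrict_add]
      rfl

lemma norm_sInt_le_of_norm_le_exp {A : Set ℝ} (hA : MeasurableSet A) (hA0 : A ⊆ Ici 0)
    {β c t : ℝ}
    (hw : IntegrableOn (fun s => rexp (-(β * s))) (Ici 0) ν.totalVariation) (hc : 0 ≤ c)
    {f : ℝ → E} (hf : ∀ s ∈ A, ‖f s‖ ≤ c * rexp (β * (t - s))) :
    ‖sInt ν A f‖ ≤ c * (∫ s in Ici 0, rexp (-(β * s)) ∂ν.totalVariation) * rexp (β * t) := by
  have hexp : ∀ s, c * rexp (β * (t - s)) = c * rexp (β * t) * rexp (-(β * s)) := fun s => by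
    rw [mul_assoc, ← Real.exp_add]
    ring_nf
  have hc' : 0 ≤ c * rexp (β * t) := by positivity
  calc ‖sInt ν A f‖ ≤ ∫ s in A, c * rexp (β * t) * rexp (-(β * s)) ∂ν.totalVariation :=
        norm_sInt_le ν hA ((hw.mono_set hA0).const_mul _) fun s hs => (hf s hs).trans_eq (hexp s)
    _ ≤ c * rexp (β * t) * ∫ s in Ici 0, rexp (-(β * s)) ∂ν.totalVariation := by
        rw [integral_const_mul]
        exact mul_le_mul_of_nonneg_left (setIntegral_mono_set hw
          (ae_of_all _ fun s => (Real.exp_pos _).le) hA0.eventuallyLE) hc'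
    _ = _ := by ring

lemma sInt_union {A B : Set ℝ} (hAB : Disjoint A B) (hB : MeasurableSet B) {f : ℝ → E}
    (hfA : IntegrableOn f A ν.totalVariation) (hfB : IntegrableOn f B ν.totalVariation) :
    sInt ν (A ∪ B) f = sInt ν A f + sInt ν B f := by
  simp only [sInt,
    setIntegral_union hAB hB (hfA.mono_measure (posPart_le_totalVariation ν))
      (hfB.mono_measure (posPart_le_totalVariation ν)),
    setIntegral_union hAB hB (hfA.mono_measure (negPart_le_totalVariation ν))
      (hfB.mono_measure (negPart_le_totalVariation ν))]
  abel

lemma sInt_sub {A : Set ℝ} {f g : ℝ → E} (hf : IntegrableOn f A ν.totalVariation)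
    (hg : IntegrableOn g A ν.totalVariation) :
    sInt ν A (fun s => f s - g s) = sInt ν A f - sInt ν A g := by
  simp only [sInt,
    integral_sub (hf.mono_measure (posPart_le_totalVariation ν))
      (hg.mono_measure (posPart_le_totalVariation ν)),
    integral_sub (hf.mono_measure (negPart_le_totalVariation ν))
      (hg.mono_measure (negPart_le_totalVariation ν))]
  abel

lemma sInt_finset_sum {A : Set ℝ} {ι : Type*} (s : Finset ι) {f : ι → ℝ → E}
    (hf : ∀ i ∈ s, IntegrableOn (f i) A ν.totalVariation) :
    sInt ν A (fun x => ∑ i ∈ s, f i x) = ∑ i ∈ s, sInt ν A (f i) := by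
  simp only [sInt,
    integral_finsetSum s fun i hi => (hf i hi).mono_measure (posPart_le_totalVariation ν),
    integral_finsetSum s fun i hi => (hf i hi).mono_measure (negPart_le_totalVariation ν),
    Finset.sum_sub_distrib]

lemma sInt_const_mul (A : Set ℝ) (c : ℂ) (f : ℝ → ℂ) :
    sInt ν A (fun s => c * f s) = c * sInt ν A f := by
  simp only [sInt, integral_const_mul, mul_sub]

lemma sInt_ofReal (A : Set ℝ) (f : ℝ → ℝ) :
    ((sInt ν A f : ℝ) : ℂ) = sInt ν A (fun s => (f s : ℂ)) := by
  simp only [sInt, Complex.ofReal_sub, integral_complex_ofReal]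

end sInt

namespace Matrix

variable {m n α : Type*} [Fintype m] [Fintype n] [NormedAddCommGroup α]

lemma frobenius_norm_eq_sqrt (A : Matrix m n α) : ‖A‖ = √(∑ i, ∑ j, ‖A i j‖ ^ 2) := by
  simp only [frobenius_norm_def, Real.rpow_two, Real.sqrt_eq_rpow]

lemma norm_entry_le_frobenius_norm (A : Matrix m n α) (i : m) (j : n) : ‖A i j‖ ≤ ‖A‖ := by
  rw [frobenius_norm_eq_sqrt]
  refine Real.le_sqrt_of_sq_le ?_
  calc ‖A i j‖ ^ 2 ≤ ∑ j', ‖A i j'‖ ^ 2 :=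
        Finset.single_le_sum (f := fun j' => ‖A i j'‖ ^ 2) (fun _ _ => sq_nonneg _)
          (Finset.mem_univ j)
    _ ≤ ∑ i', ∑ j', ‖A i' j'‖ ^ 2 :=
        Finset.single_le_sum (f := fun i' => ∑ j', ‖A i' j'‖ ^ 2)
          (fun _ _ => Finset.sum_nonneg fun _ _ => sq_nonneg _) (Finset.mem_univ i)

lemma frobenius_norm_le_sum_norm_entry (A : Matrix m n α) : ‖A‖ ≤ ∑ i, ∑ j, ‖A i j‖ := by
  rw [frobenius_norm_eq_sqrt, Real.sqrt_le_left (by positivity)]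
  calc ∑ i, ∑ j, ‖A i j‖ ^ 2 ≤ ∑ i, (∑ j, ‖A i j‖) ^ 2 :=
        Finset.sum_le_sum fun i _ => Finset.sum_sq_le_sq_sum_of_nonneg fun _ _ => norm_nonneg _
    _ ≤ (∑ i, ∑ j, ‖A i j‖) ^ 2 :=
        Finset.sum_sq_le_sq_sum_of_nonneg fun _ _ => by positivity

end Matrix

lemma frobC_eq_norm {d e : ℕ} (A : Matrix (Fin d) (Fin e) ℂ) : frobC A = ‖A‖ :=
  (Matrix.frobenius_norm_eq_sqrt A).symm

lemma norm_cexp_mul_le {z : ℂ} {β u : ℝ} (hβ : β ≤ z.re) (hu : u ≤ 0) :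
    ‖cexp (z * u)‖ ≤ rexp (β * u) := by
  rw [Complex.norm_exp, Complex.re_mul_ofReal]
  exact Real.exp_le_exp.2 (mul_le_mul_of_nonpos_right hβ hu)

lemma integrableOn_cexp_neg_mul {ν : Measure ℝ} {β : ℝ} {z : ℂ}
    (hw : IntegrableOn (fun s => rexp (-(β * s))) (Ici 0) ν) (hβ : β ≤ z.re) :
    IntegrableOn (fun s : ℝ => cexp (-(z * s))) (Ici 0) ν := by
  refine hw.mono' (by fun_prop) <|
    (ae_restrict_iff' measurableSet_Ici).2 <| ae_of_all _ fun s hs => ?_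
  simpa [mul_neg] using norm_cexp_mul_le hβ (neg_nonpos.2 (mem_Ici.1 hs))

lemma cexp_smul_apply_sub {d : ℕ} (z : ℂ) (K : Matrix (Fin d) (Fin d) ℂ) (t s : ℝ)
    (j k : Fin d) :
    (cexp (z * ((t - s : ℝ) : ℂ)) • K) j k = (cexp (z * t) * K j k) * cexp (-(z * s)) := by
  rw [Matrix.smul_apply, smul_eq_mul, mul_right_comm, ← Complex.exp_add]
  push_cast
  ring_nf

section convOn

variable {d : ℕ} (μ : Matrix (Fin d) (Fin d) (SignedMeasure ℝ))

noncomputable def convOn (A : Set ℝ) (F : ℝ → Matrix (Fin d) (Fin d) ℂ) (t : ℝ) :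
    Matrix (Fin d) (Fin d) ℂ :=
  Matrix.of fun i k => ∑ j, sInt (μ i j) A (fun s => F (t - s) j k)

lemma measConv_map_ofReal (r : ℝ → Matrix (Fin d) (Fin d) ℝ) (t : ℝ) :
    (measConv μ r t).map Complex.ofReal =
      convOn μ (Icc 0 t) (fun u => (r u).map Complex.ofReal) t := by
  ext i k
  simp [measConv, convOn, sInt_ofReal]

lemma convOn_Ici_cexp_smul {z : ℂ} {K : Matrix (Fin d) (Fin d) ℂ}
    (hK : (z • (1 : Matrix (Fin d) (Fin d) ℂ) - muHat μ z) * K = 0) (t : ℝ) :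
    convOn μ (Ici 0) (fun u => cexp (z * u) • K) t = (z * cexp (z * t)) • K := by
  have hmuK : muHat μ z * K = z • K := by
    rw [sub_mul, smul_mul_assoc, one_mul, sub_eq_zero] at hK
    exact hK.symm
  ext i k
  calc convOn μ (Ici 0) (fun u => cexp (z * u) • K) t i k
      = ∑ j, cexp (z * t) * (muHat μ z i j * K j k) := by
        simp only [convOn, Matrix.of_apply, cexp_smul_apply_sub, sInt_const_mul, muHat]
        exact Finset.sum_congr rfl fun j _ => by ring
    _ = ((z * cexp (z * t)) • K) i k := by
        rw [← Finset.mul_sum, ← Matrix.mul_apply, hmuK]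
        simp only [Matrix.smul_apply, smul_eq_mul]
        ring

lemma convOn_union {A B : Set ℝ} (hAB : Disjoint A B) (hB : MeasurableSet B)
    {F : ℝ → Matrix (Fin d) (Fin d) ℂ} {t : ℝ}
    (hFA : ∀ i j k, IntegrableOn (fun s => F (t - s) j k) A (μ i j).totalVariation)
    (hFB : ∀ i j k, IntegrableOn (fun s => F (t - s) j k) B (μ i j).totalVariation) :
    convOn μ (A ∪ B) F t = convOn μ A F t + convOn μ B F t := by
  ext i k
  simp only [convOn, Matrix.of_apply, Matrix.add_apply, ← Finset.sum_add_distrib,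
    sInt_union _ hAB hB (hFA _ _ _) (hFB _ _ _)]

lemma convOn_sub {A : Set ℝ} {F G : ℝ → Matrix (Fin d) (Fin d) ℂ} {t : ℝ}
    (hF : ∀ i j k, IntegrableOn (fun s => F (t - s) j k) A (μ i j).totalVariation)
    (hG : ∀ i j k, IntegrableOn (fun s => G (t - s) j k) A (μ i j).totalVariation) :
    convOn μ A (F - G) t = convOn μ A F t - convOn μ A G t := by
  ext i k
  simp only [convOn, Matrix.of_apply, Matrix.sub_apply, Pi.sub_apply, ← Finset.sum_sub_distrib,
    sInt_sub _ (hF _ _ _) (hG _ _ _)]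

lemma convOn_finset_sum {A : Set ℝ} {ι : Type*} (s : Finset ι)
    {F : ι → ℝ → Matrix (Fin d) (Fin d) ℂ} {t : ℝ}
    (hF : ∀ m ∈ s, ∀ i j k, IntegrableOn (fun s => F m (t - s) j k) A (μ i j).totalVariation) :
    convOn μ A (∑ m ∈ s, F m) t = ∑ m ∈ s, convOn μ A (F m) t := by
  ext i k
  simp only [convOn, Matrix.of_apply, Matrix.sum_apply, Finset.sum_apply]
  rw [Finset.sum_comm]
  exact Finset.sum_congr rfl fun j _ => sInt_finset_sum _ s fun m hm => hF m hm i j k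

lemma norm_convOn_le {A : Set ℝ} (hA : MeasurableSet A) (hA0 : A ⊆ Ici 0) {β c t : ℝ}
    (hw : ∀ i j, IntegrableOn (fun s => rexp (-(β * s))) (Ici 0) (μ i j).totalVariation)
    (hc : 0 ≤ c) {F : ℝ → Matrix (Fin d) (Fin d) ℂ}
    (hF : ∀ s ∈ A, ‖F (t - s)‖ ≤ c * rexp (β * (t - s))) :
    ‖convOn μ A F t‖ ≤ d * c *
      (∑ i, ∑ j, ∫ s in Ici 0, rexp (-(β * s)) ∂(μ i j).totalVariation) * rexp (β * t) := by
  have hentry : ∀ i k, ‖convOn μ A F t i k‖ ≤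
      ∑ j, c * (∫ s in Ici 0, rexp (-(β * s)) ∂(μ i j).totalVariation) * rexp (β * t) :=
    fun i k => (norm_sum_le Finset.univ _).trans <| Finset.sum_le_sum fun j _ =>
      norm_sInt_le_of_norm_le_exp _ hA hA0 (hw i j) hc fun s hs =>
        (Matrix.norm_entry_le_frobenius_norm _ j k).trans (hF s hs)
  calc ‖convOn μ A F t‖ ≤ ∑ i, ∑ k, ‖convOn μ A F t i k‖ :=
        Matrix.frobenius_norm_le_sum_norm_entry _
    _ ≤ ∑ i : Fin d, ∑ _k : Fin d,
          ∑ j, c * (∫ s in Ici 0, rexp (-(β * s)) ∂(μ i j).totalVariation) * rexp (β * t) :=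
        Finset.sum_le_sum fun i _ => Finset.sum_le_sum fun k _ => hentry i k
    _ = _ := by
        simp only [Finset.sum_const, Finset.card_univ, Fintype.card_fin, nsmul_eq_mul,
          ← Finset.sum_mul, ← Finset.mul_sum]
        ring

lemma measConv_sub_sum_eq_convOn {N : ℕ} {lam : Fin N → ℂ}
    {K : Fin N → Matrix (Fin d) (Fin d) ℂ}
    (hK : ∀ m, (lam m • (1 : Matrix (Fin d) (Fin d) ℂ) - muHat μ (lam m)) * K m = 0)
    (hexp : ∀ m i j,
      IntegrableOn (fun s : ℝ => cexp (-(lam m * s))) (Ici 0) (μ i j).totalVariation)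
    {r : ℝ → Matrix (Fin d) (Fin d) ℝ} (hr : ∀ j k, ContinuousOn (fun u => r u j k) (Ici 0))
    {t : ℝ} (ht : 0 ≤ t) :
    (measConv μ r t).map Complex.ofReal - ∑ m, (lam m * cexp (lam m * t)) • K m =
      convOn μ (Icc 0 t) (fun u => (r u).map Complex.ofReal - ∑ m, cexp (lam m * u) • K m) t -
        ∑ m, convOn μ (Ioi t) (fun u => cexp (lam m * u) • K m) t := by
  set E : Fin N → ℝ → Matrix (Fin d) (Fin d) ℂ := fun m u => cexp (lam m * u) • K m
  have hE : ∀ m i j k, IntegrableOn (fun s => E m (t - s) j k) (Ici 0) (μ i j).totalVariation :=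
    fun m i j k => by
      simp only [E, cexp_smul_apply_sub]
      exact (hexp m i j).const_mul _
  have hEIcc : ∀ m i j k,
      IntegrableOn (fun s => E m (t - s) j k) (Icc 0 t) (μ i j).totalVariation :=
    fun m i j k => (hE m i j k).mono_set Icc_subset_Ici_self
  have hrIcc : ∀ i j k, IntegrableOn (fun s => (r (t - s)).map Complex.ofReal j k) (Icc 0 t)
      (μ i j).totalVariation := fun i j k =>
    have hcont : ContinuousOn (fun s => r (t - s) j k) (Icc 0 t) :=
      (hr j k).comp (by fun_prop) fun s hs => sub_nonneg.2 hs.2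
    (Complex.continuous_ofReal.comp_continuousOn hcont).integrableOn_compact isCompact_Icc
  have hsplit : ∀ m, (lam m * cexp (lam m * t)) • K m =
      convOn μ (Icc 0 t) (E m) t + convOn μ (Ioi t) (E m) t := fun m => by
    rw [← convOn_Ici_cexp_smul μ (hK m) t, ← Icc_union_Ioi_eq_Ici ht]
    exact convOn_union μ ((Iic_disjoint_Ioi le_rfl).mono_left Icc_subset_Iic_self)
      measurableSet_Ioi (hEIcc m) fun i j k => (hE m i j k).mono_set fun s hs => ht.trans hs.le
  have hsum : (fun u => (r u).map Complex.ofReal - ∑ m, E m u) =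
      (fun u => (r u).map Complex.ofReal) - ∑ m, E m := by
    ext u : 1
    simp
  rw [measConv_map_ofReal, Finset.sum_congr rfl fun m _ => hsplit m, Finset.sum_add_distrib, hsum,
    convOn_sub μ hrIcc, convOn_finset_sum μ _ fun m _ => hEIcc m]
  · abel
  · intro i j k
    simp only [Finset.sum_apply, Matrix.sum_apply]
    exact integrable_finsetSum _ fun m _ => hEIcc m i j k

end convOn

theorem stmt4_general (d : ℕ) (α ε : ℝ) (hε : 0 < ε) (N : ℕ)
    (μ : Matrix (Fin d) (Fin d) (MeasureTheory.SignedMeasure ℝ))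
    (hμ : ∀ i j, IntegrableOn (fun s => Real.exp (-((α - ε) * s))) (Ici 0)
      (μ i j).totalVariation)
    (lam : Fin N → ℂ) (hlam : ∀ j, (lam j).re = α)
    (K : Fin N → Matrix (Fin d) (Fin d) ℂ)
    (hK : ∀ j, (lam j • (1 : Matrix (Fin d) (Fin d) ℂ) - muHat μ (lam j)) * K j = 0)
    (r r' : ℝ → Matrix (Fin d) (Fin d) ℝ)
    (hr : ∀ t ∈ Ici (0 : ℝ), ∀ i k,
      HasDerivWithinAt (fun u => r u i k) (r' t i k) (Ici 0) t)
    (hreq : ∀ t ≥ (0 : ℝ), r' t = measConv μ r t)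
    (M : ℝ) (hM : 0 < M)
    (hRbd : ∀ t ≥ (0 : ℝ),
      frobC ((r t).map (Complex.ofReal) - ∑ j, Complex.exp (lam j * t) • K j)
        ≤ M * Real.exp ((α - ε) * t)) :
    ∃ M₁ t₁ : ℝ, ∀ t ≥ t₁,
      frobC ((r' t).map (Complex.ofReal) - ∑ j, (lam j * Complex.exp (lam j * t)) • K j)
        ≤ M₁ * Real.exp ((α - ε) * t) := by
  set W := ∑ i, ∑ j, ∫ s in Ici 0, rexp (-((α - ε) * s)) ∂(μ i j).totalVariation
  have hβ : ∀ m, α - ε ≤ (lam m).re := fun m => by linarith [hlam m]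
  refine ⟨d * (M + ∑ m, ‖K m‖) * W, 0, fun t ht => ?_⟩
  simp only [frobC_eq_norm] at hRbd ⊢
  rw [hreq t ht, measConv_sub_sum_eq_convOn μ hK
    (fun m i j => integrableOn_cexp_neg_mul (hμ i j) (hβ m))
    (fun j k u hu => (hr u hu j k).continuousWithinAt) ht]
  have hIcc : ‖convOn μ (Icc 0 t)
      (fun u => (r u).map Complex.ofReal - ∑ m, cexp (lam m * u) • K m) t‖ ≤
      d * M * W * rexp ((α - ε) * t) :=
    norm_convOn_le μ measurableSet_Icc Icc_subset_Ici_self hμ hM.le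
      fun s hs => hRbd (t - s) (sub_nonneg.2 hs.2)
  have hIoi : ∀ m, ‖convOn μ (Ioi t) (fun u => cexp (lam m * u) • K m) t‖ ≤
      d * ‖K m‖ * W * rexp ((α - ε) * t) := fun m =>
    norm_convOn_le μ measurableSet_Ioi (fun s hs => ht.trans hs.le) hμ (norm_nonneg _)
      fun s hs => by
        rw [norm_smul, mul_comm]
        exact mul_le_mul_of_nonneg_left (norm_cexp_mul_le (hβ m) (by linarith [mem_Ioi.1 hs]))
          (norm_nonneg _)
  calc _ ≤ ‖convOn μ (Icc 0 t)
          (fun u => (r u).map Complex.ofReal - ∑ m, cexp (lam m * u) • K m) t‖ +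
          ∑ m, ‖convOn μ (Ioi t) (fun u => cexp (lam m * u) • K m) t‖ :=
        (norm_sub_le _ _).trans (add_le_add le_rfl (norm_sum_le _ _))
    _ ≤ d * M * W * rexp ((α - ε) * t) + ∑ m, d * ‖K m‖ * W * rexp ((α - ε) * t) :=
        add_le_add hIcc (Finset.sum_le_sum fun m _ => hIoi m)
    _ = d * (M + ∑ m, ‖K m‖) * W * rexp ((α - ε) * t) := by
        simp only [← Finset.sum_mul, ← Finset.mul_sum]
        ring

/-- case `n = 0` of the derivative estimate for the remainder term of
the Volterra resolvent: with `S(t) = Σ_j e^{λ_j t} K_j` built from simple leading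
characteristic roots, `R = r − S` with `‖R(t)‖ ≤ M e^{(α−ε)t}` implies
`R′(t) = O(e^{(α−ε)t})` as `t → ∞`. -/
theorem stmt4 (d : ℕ) (α ε : ℝ) (hε : 0 < ε) (N : ℕ) (hN : 1 ≤ N)
    (μ : Matrix (Fin d) (Fin d) (MeasureTheory.SignedMeasure ℝ))
    (hμ : ∀ i j, IntegrableOn (fun s => Real.exp (-((α - ε) * s))) (Ici 0)
      (μ i j).totalVariation)
    (lam : Fin N → ℂ) (hlam : ∀ j, (lam j).re = α)
    (K : Fin N → Matrix (Fin d) (Fin d) ℂ)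
    (hK : ∀ j, (lam j • (1 : Matrix (Fin d) (Fin d) ℂ) - muHat μ (lam j)) * K j = 0)
    (r r' : ℝ → Matrix (Fin d) (Fin d) ℝ)
    (hr : ∀ t ∈ Ici (0 : ℝ), ∀ i k,
      HasDerivWithinAt (fun u => r u i k) (r' t i k) (Ici 0) t)
    (hreq : ∀ t ≥ (0 : ℝ), r' t = measConv μ r t)
    (M : ℝ) (hM : 0 < M)
    (hRbd : ∀ t ≥ (0 : ℝ),
      frobC ((r t).map (Complex.ofReal) - ∑ j, Complex.exp (lam j * t) • K j)
        ≤ M * Real.exp ((α - ε) * t)) :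
    ∃ M₁ t₁ : ℝ, ∀ t ≥ t₁,
      frobC ((r' t).map (Complex.ofReal) - ∑ j, (lam j * Complex.exp (lam j * t)) • K j)
        ≤ M₁ * Real.exp ((α - ε) * t) :=
  stmt4_general d α ε hε N μ hμ lam hlam K hK r r' hr hreq M hM hRbd
end

section
/- Let α ∈ ℝ, let n ≥ 1 be an integer, let R : [0,∞) → ℝ^{d×d} be measurable with ‖R(t)‖ ≤ M (1+t)^{n−1} e^{α t} for all t ≥ 0 and some M > 0, and let f : [0,∞) → ℝ^d be continuous with ∫₀^∞ e^{−α t} |f(t)| dt < ∞. Then lim_{t→∞} (1 / (t^n e^{α t})) ∫₀^t R(t−s) f(s) ds = 0. -/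
open MeasureTheory Set Filter Matrix

/-- Frobenius norm of a real matrix. -/
noncomputable def frob {d e : ℕ} (A : Matrix (Fin d) (Fin e) ℝ) : ℝ :=
  Real.sqrt (∑ i, ∑ j, (A i j) ^ 2)

/-- Euclidean norm on `ℝ^d`. -/
noncomputable def eNorm {d : ℕ} (v : Fin d → ℝ) : ℝ :=
  Real.sqrt (∑ i, (v i) ^ 2)

lemma frob_nonneg {d e : ℕ} (A : Matrix (Fin d) (Fin e) ℝ) : 0 ≤ frob A :=
  Real.sqrt_nonneg _

lemma eNorm_nonneg {d : ℕ} (v : Fin d → ℝ) : 0 ≤ eNorm v :=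
  Real.sqrt_nonneg _

lemma norm_mulVec_le {d : ℕ} (A : Matrix (Fin d) (Fin d) ℝ) (v : Fin d → ℝ) :
    ‖A.mulVec v‖ ≤ frob A * eNorm v := by
  have hnn : 0 ≤ frob A * eNorm v := mul_nonneg (frob_nonneg A) (eNorm_nonneg v)
  rw [pi_norm_le_iff_of_nonneg hnn]
  intro i
  rw [Real.norm_eq_abs]
  have hcs : (∑ k, A i k * v k) ^ 2 ≤ (∑ k, (A i k) ^ 2) * (∑ k, (v k) ^ 2) :=
    Finset.sum_mul_sq_le_sq_mul_sq _ _ _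
  have h1 : |A.mulVec v i| ≤ Real.sqrt ((∑ k, (A i k) ^ 2) * (∑ k, (v k) ^ 2)) := by
    rw [Matrix.mulVec, dotProduct]
    calc |∑ k, A i k * v k| = Real.sqrt ((∑ k, A i k * v k) ^ 2) := by
          rw [Real.sqrt_sq_eq_abs]
      _ ≤ _ := Real.sqrt_le_sqrt hcs
  refine h1.trans ?_
  rw [Real.sqrt_mul (Finset.sum_nonneg fun k _ => sq_nonneg _)]
  apply mul_le_mul_of_nonneg_right _ (eNorm_nonneg v)
  apply Real.sqrt_le_sqrt
  exact Finset.single_le_sum (f := fun j => ∑ k, (A j k) ^ 2)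
    (fun j _ => Finset.sum_nonneg fun k _ => sq_nonneg _) (Finset.mem_univ i)

/-- if `‖R(t)‖ ≤ M (1+t)^{n−1} e^{αt}` and
`∫₀^∞ e^{−αt}|f(t)| dt < ∞` with `f` continuous, then
`(1/(t^n e^{αt})) ∫₀^t R(t−s) f(s) ds → 0` as `t → ∞`. -/
theorem stmt8 (d : ℕ) (α : ℝ) (n : ℕ) (hn : 1 ≤ n)
    (R : ℝ → Matrix (Fin d) (Fin d) ℝ)
    (hRmeas : ∀ i k, Measurable fun t => R t i k)
    (M : ℝ) (hM : 0 < M)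
    (hRbd : ∀ t ≥ (0 : ℝ), frob (R t) ≤ M * (1 + t) ^ (n - 1) * Real.exp (α * t))
    (f : ℝ → Fin d → ℝ) (hf : Continuous f)
    (hfint : IntegrableOn (fun t => Real.exp (-(α * t)) * eNorm (f t)) (Ici 0)) :
    Tendsto (fun t : ℝ => (t ^ n * Real.exp (α * t))⁻¹ •
        ∫ s in Icc (0 : ℝ) t, (R (t - s)).mulVec (f s))
      atTop (nhds 0) := by
  set C : ℝ := ∫ s in Ici (0:ℝ), Real.exp (-(α * s)) * eNorm (f s) with hCdef
  have hC : 0 ≤ C :=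
    setIntegral_nonneg measurableSet_Ici fun s _ =>
      mul_nonneg (Real.exp_pos _).le (eNorm_nonneg _)
  have key : ∀ t : ℝ, 1 ≤ t →
      ‖(t ^ n * Real.exp (α * t))⁻¹ •
        ∫ s in Icc (0 : ℝ) t, (R (t - s)).mulVec (f s)‖ ≤ M * C * 2 ^ (n-1) / t := by
    intro t ht
    have ht0 : (0:ℝ) < t := lt_of_lt_of_le one_pos ht
    have hI : ‖∫ s in Icc (0:ℝ) t, (R (t - s)).mulVec (f s)‖
        ≤ M * (1 + t) ^ (n-1) * Real.exp (α * t) * C := by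
      calc ‖∫ s in Icc (0:ℝ) t, (R (t - s)).mulVec (f s)‖
          ≤ ∫ s in Icc (0:ℝ) t, ‖(R (t - s)).mulVec (f s)‖ :=
            norm_integral_le_integral_norm _
        _ ≤ ∫ s in Icc (0:ℝ) t,
            (M * (1 + t) ^ (n-1) * Real.exp (α * t)) *
              (Real.exp (-(α * s)) * eNorm (f s)) := by
            apply integral_mono_of_nonneg
            · exact Eventually.of_forall fun s => norm_nonneg _
            · exact (hfint.mono_set Icc_subset_Ici_self).const_mul _
            · filter_upwards [ae_restrict_mem measurableSet_Icc] with s hs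
              have hts : (0:ℝ) ≤ t - s := by linarith [hs.2]
              calc ‖(R (t - s)).mulVec (f s)‖
                  ≤ frob (R (t - s)) * eNorm (f s) := norm_mulVec_le _ _
                _ ≤ (M * (1 + t) ^ (n-1) * Real.exp (α * (t - s))) * eNorm (f s) := by
                    apply mul_le_mul_of_nonneg_right _ (eNorm_nonneg _)
                    refine (hRbd _ hts).trans ?_
                    have : (1 + (t - s)) ^ (n-1) ≤ (1 + t) ^ (n-1) :=
                      pow_le_pow_left₀ (by linarith) (by linarith [hs.1]) _
                    have hMe : (0:ℝ) ≤ M * Real.exp (α * (t - s)) :=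
                      mul_nonneg hM.le (Real.exp_pos _).le
                    nlinarith [this, hM.le, (Real.exp_pos (α * (t - s))).le]
                _ = (M * (1 + t) ^ (n-1) * Real.exp (α * t)) *
                      (Real.exp (-(α * s)) * eNorm (f s)) := by
                    rw [show α * (t - s) = α * t + -(α * s) by ring, Real.exp_add]
                    ring
        _ = (M * (1 + t) ^ (n-1) * Real.exp (α * t)) *
              ∫ s in Icc (0:ℝ) t, Real.exp (-(α * s)) * eNorm (f s) :=
            MeasureTheory.integral_const_mul _ _
        _ ≤ M * (1 + t) ^ (n-1) * Real.exp (α * t) * C := by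
            apply mul_le_mul_of_nonneg_left _
              (by positivity)
            exact setIntegral_mono_set hfint
              (Eventually.of_forall fun s =>
                mul_nonneg (Real.exp_pos _).le (eNorm_nonneg _))
              (HasSubset.Subset.eventuallyLE Icc_subset_Ici_self)
    have hpos : (0:ℝ) < t ^ n * Real.exp (α * t) :=
      mul_pos (pow_pos ht0 n) (Real.exp_pos _)
    rw [norm_smul, Real.norm_eq_abs, abs_inv, abs_of_pos hpos]
    have step1 : (t ^ n * Real.exp (α * t))⁻¹ *
        ‖∫ s in Icc (0:ℝ) t, (R (t - s)).mulVec (f s)‖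
        ≤ (t ^ n * Real.exp (α * t))⁻¹ * (M * (1 + t) ^ (n-1) * Real.exp (α * t) * C) :=
      mul_le_mul_of_nonneg_left hI (inv_nonneg.mpr hpos.le)
    refine step1.trans ?_
    have heq : (t ^ n * Real.exp (α * t))⁻¹ *
        (M * (1 + t) ^ (n-1) * Real.exp (α * t) * C)
        = M * C * (1 + t) ^ (n-1) / t ^ n := by
      field_simp
    rw [heq]
    have h1 : (1 + t) ^ (n-1) ≤ 2 ^ (n-1) * t ^ (n-1) := by
      rw [← mul_pow]
      exact pow_le_pow_left₀ (by linarith) (by linarith) _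
    have h2 : t ^ n = t ^ (n-1) * t := by
      conv_lhs => rw [← Nat.sub_add_cancel hn]
      rw [pow_succ]
    rw [h2, div_le_div_iff₀ (by positivity) ht0]
    have hMC : 0 ≤ M * C := mul_nonneg hM.le hC
    have htn : (0:ℝ) < t ^ (n-1) := pow_pos ht0 _
    nlinarith [mul_le_mul_of_nonneg_left h1 hMC]
  have hlim : Tendsto (fun t : ℝ => M * C * 2 ^ (n-1) / t) atTop (nhds 0) :=
    tendsto_const_nhds.div_atTop tendsto_id
  refine tendsto_zero_iff_norm_tendsto_zero.mpr ?_
  exact squeeze_zero' (Eventually.of_forall fun t => norm_nonneg _)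
    ((eventually_ge_atTop 1).mono key) hlim
end

section
/- Let α ∈ ℝ, let n ≥ 1 be an integer, let N ≥ 1, let β_1, …, β_N ∈ ℝ, and for each j let P_j, Q_j be ℝ^{d×d}-valued polynomials of degree n with P_j(t) = t^n P_j^* + O(t^{n−1}) and Q_j(t) = t^n Q_j^* + O(t^{n−1}). Suppose r : [0,∞) → ℝ^{d×d} satisfies r(t) = Σ_{j=1}^N e^{α t} { P_j(t) cos(β_j t) + Q_j(t) sin(β_j t) } + R(t) for t ≥ 0, where ‖R(t)‖ ≤ M (1+t)^{n−1} e^{α t} for all t ≥ 0 and some M > 0. Let f : [0,∞) → ℝ^d be continuous with ∫₀^∞ e^{−α t} |f(t)| dt < ∞. Then lim_{t→∞} ( (1 / (t^n e^{α t})) ∫₀^t r(t−s) f(s) ds − Σ_{j=1}^N { D_{1,j} sin(β_j t) + D_{2,j} cos(β_j t) } ) = 0, where D_{1,j} = ∫₀^∞ e^{−α s} { P_j^* sin(β_j s) + Q_j^* cos(β_j s) } f(s) ds and D_{2,j} = ∫₀^∞ e^{−α s} { P_j^* cos(β_j s) − Q_j^* sin(β_j s) } f(s) ds. -/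
/-!
Let `v₁(s) = e^{-αs} (sin (βs) P* + cos (βs) Q*) f(s)` and
`v₂(s) = e^{-αs} (cos (βs) P* - sin (βs) Q*) f(s)`. By the addition formulas for `cos (β(t - s))`
and `sin (β(t - s))`, the degree-`n` part of each mode contributes
`sin (βt) ∫₀ᵗ ((t - s)/t)ⁿ v₁(s) ds + cos (βt) ∫₀ᵗ ((t - s)/t)ⁿ v₂(s) ds` to the normalised
convolution, and by dominated convergence these truncated integrals tend to `D₁ = ∫₀^∞ v₁` and
`D₂ = ∫₀^∞ v₂`. The lower-degree coefficients together with `R` form a kernel bounded by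
`C (1 + τ)^{n-1} e^{ατ}`; since `(1 + t - s)^{n-1} ≤ (2t)^{n-1}` for `0 ≤ s ≤ t`, its normalised
convolution is `O(1/t)`.
-/

open MeasureTheory Set Filter Matrix

open Real Topology

attribute [local instance] Matrix.frobeniusNormedAddCommGroup Matrix.frobeniusNormedSpace

section Frobenius

variable {ι κ : Type*} [Fintype ι] [Fintype κ]

theorem frob_eq_norm {d e : ℕ} (A : Matrix (Fin d) (Fin e) ℝ) : frob A = ‖A‖ := by
  rw [frob, frobenius_norm_def, Real.sqrt_eq_rpow]
  simp only [Real.norm_eq_abs, Real.rpow_two, sq_abs]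

theorem eNorm_eq_norm {d : ℕ} (v : Fin d → ℝ) : eNorm v = ‖WithLp.toLp 2 v‖ := by
  rw [eNorm, EuclideanSpace.norm_eq]
  simp only [Real.norm_eq_abs, sq_abs]

theorem Matrix.norm_mulVec_le_frobenius (A : Matrix ι κ ℝ) (v : κ → ℝ) :
    ‖A *ᵥ v‖ ≤ ‖A‖ * ‖WithLp.toLp 2 v‖ := by
  refine (pi_norm_le_iff_of_nonneg (by positivity)).2 fun i => ?_
  have hrow : ‖WithLp.toLp 2 (A i)‖ ≤ ‖A‖ :=
    PiLp.norm_apply_le (WithLp.toLp 2 fun i => WithLp.toLp 2 (A i)) i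
  calc ‖(A *ᵥ v) i‖ = |inner ℝ (WithLp.toLp 2 (A i)) (WithLp.toLp 2 v)| := by
        simp [Matrix.mulVec, dotProduct, PiLp.inner_apply, mul_comm]
    _ ≤ ‖WithLp.toLp 2 (A i)‖ * ‖WithLp.toLp 2 v‖ := abs_real_inner_le_norm _ _
    _ ≤ ‖A‖ * ‖WithLp.toLp 2 v‖ := by gcongr

end Frobenius

section Averaging

variable {E : Type*} [NormedAddCommGroup E] [NormedSpace ℝ E]

theorem norm_smul_add_smul_le_of_abs_le_one {a b : ℝ} (ha : |a| ≤ 1) (hb : |b| ≤ 1) (x y : E) :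
    ‖a • x + b • y‖ ≤ ‖x‖ + ‖y‖ := by
  refine (norm_add_le _ _).trans (add_le_add ?_ ?_) <;> rw [norm_smul, Real.norm_eq_abs]
  · exact mul_le_of_le_one_left (norm_nonneg x) ha
  · exact mul_le_of_le_one_left (norm_nonneg y) hb

theorem pow_sub_div_self_mem_Icc {s t : ℝ} (n : ℕ) (hs : s ∈ Icc 0 t) :
    ((t - s) / t) ^ n ∈ Icc (0 : ℝ) 1 := by
  have h0 : 0 ≤ (t - s) / t := div_nonneg (by linarith [hs.2]) (hs.1.trans hs.2)
  have h1 : (t - s) / t ≤ 1 := div_le_one_of_le₀ (by linarith [hs.1]) (hs.1.trans hs.2)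
  exact ⟨pow_nonneg h0 n, pow_le_one₀ h0 h1⟩

theorem tendsto_sub_div_self_atTop (s : ℝ) : Tendsto (fun t : ℝ => (t - s) / t) atTop (𝓝 1) := by
  have := tendsto_const_nhds (x := (1 : ℝ)) |>.sub
    ((tendsto_const_nhds (x := s)).div_atTop tendsto_id)
  rw [sub_zero] at this
  refine this.congr' ?_
  filter_upwards [eventually_ne_atTop 0] with t ht
  simp [sub_div, div_self ht]

theorem tendsto_setIntegral_Icc_pow_sub_div_smul (n : ℕ) {h : ℝ → E}
    (hh : IntegrableOn h (Ici 0)) :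
    Tendsto (fun t => ∫ s in Icc 0 t, ((t - s) / t) ^ n • h s) atTop
      (𝓝 (∫ s in Ici 0, h s)) := by
  set F : ℝ → ℝ → E := fun t => (Icc 0 t).indicator fun s => ((t - s) / t) ^ n • h s
  have hmeas : ∀ t, AEStronglyMeasurable (F t) (volume.restrict (Ici 0)) := fun t =>
    ((by fun_prop : Continuous fun s : ℝ => ((t - s) / t) ^ n).aestronglyMeasurable.smul
      hh.aestronglyMeasurable).indicator measurableSet_Icc
  have hbound : ∀ t, ∀ s, ‖F t s‖ ≤ ‖h s‖ := by
    intro t s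
    by_cases hs : s ∈ Icc 0 t
    · obtain ⟨h0, h1⟩ := pow_sub_div_self_mem_Icc n hs
      rw [show F t s = _ from indicator_of_mem hs _, norm_smul, Real.norm_of_nonneg h0]
      exact mul_le_of_le_one_left (norm_nonneg _) h1
    · simp [F, indicator_of_notMem hs]
  have hlim : ∀ s ∈ Ici (0 : ℝ), Tendsto (F · s) atTop (𝓝 (h s)) := by
    intro s hs
    have := ((tendsto_sub_div_self_atTop s).pow n).smul_const (h s)
    rw [one_pow, one_smul] at this
    refine this.congr' ?_
    filter_upwards [eventually_ge_atTop s] with t ht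
    simp [F, indicator_of_mem (show s ∈ Icc 0 t from ⟨hs, ht⟩)]
  have key := tendsto_integral_filter_of_dominated_convergence (fun s => ‖h s‖)
    (.of_forall hmeas) (.of_forall fun t => .of_forall (hbound t)) hh.norm
    ((ae_restrict_iff' measurableSet_Ici).2 (.of_forall hlim))
  refine key.congr' ?_
  filter_upwards [eventually_ge_atTop 0] with t ht
  rw [setIntegral_indicator measurableSet_Icc, inter_eq_right.2 Icc_subset_Ici_self]

theorem tendsto_setIntegral_Icc_of_norm_le_inv_mul {F : ℝ → ℝ → E} {g : ℝ → ℝ}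
    (hg : IntegrableOn g (Ici 0)) (hg0 : ∀ s, 0 ≤ g s)
    (hF : ∀ᶠ t in atTop, ∀ s ∈ Icc 0 t, ‖F t s‖ ≤ t⁻¹ * g s) :
    Tendsto (fun t => ∫ s in Icc 0 t, F t s) atTop (𝓝 0) := by
  have hlim : Tendsto (fun t : ℝ => t⁻¹ * ∫ s in Ici 0, g s) atTop (𝓝 0) := by
    simpa using tendsto_inv_atTop_zero.mul_const (∫ s in Ici 0, g s)
  refine squeeze_zero_norm' ?_ hlim
  filter_upwards [hF, eventually_gt_atTop 0] with t hFt ht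
  calc ‖∫ s in Icc 0 t, F t s‖ ≤ ∫ s in Icc 0 t, t⁻¹ * g s :=
        norm_integral_le_of_norm_le ((hg.mono_set Icc_subset_Ici_self).const_mul _)
          ((ae_restrict_iff' measurableSet_Icc).2 (.of_forall hFt))
    _ = t⁻¹ * ∫ s in Icc 0 t, g s := integral_const_mul _ _
    _ ≤ t⁻¹ * ∫ s in Ici 0, g s := mul_le_mul_of_nonneg_left
        (setIntegral_mono_set hg (.of_forall hg0) Icc_subset_Ici_self.eventuallyLE) (by positivity)

end Averaging

theorem inv_mul_growth_le {n : ℕ} (hn : 1 ≤ n) {α M s t : ℝ} (hM : 0 ≤ M) (ht : 1 ≤ t)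
    (hs : s ∈ Icc 0 t) :
    (t ^ n * exp (α * t))⁻¹ * (M * (1 + (t - s)) ^ (n - 1) * exp (α * (t - s))) ≤
      t⁻¹ * (M * 2 ^ (n - 1) * exp (-(α * s))) := by
  have hpow : (1 + (t - s)) ^ (n - 1) ≤ 2 ^ (n - 1) * t ^ (n - 1) := by
    rw [← mul_pow]
    exact pow_le_pow_left₀ (by linarith [hs.2]) (by linarith [hs.1]) _
  have htn : t ^ n = t ^ (n - 1) * t := by rw [← pow_succ, Nat.sub_add_cancel hn]
  have ht0 : 0 < t := by linarith
  calc (t ^ n * exp (α * t))⁻¹ * (M * (1 + (t - s)) ^ (n - 1) * exp (α * (t - s)))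
      = M * (1 + (t - s)) ^ (n - 1) * exp (-(α * s)) / (t ^ (n - 1) * t) := by
        rw [htn, mul_sub, exp_sub, exp_neg]
        field_simp
    _ ≤ M * (2 ^ (n - 1) * t ^ (n - 1)) * exp (-(α * s)) / (t ^ (n - 1) * t) := by gcongr
    _ = t⁻¹ * (M * 2 ^ (n - 1) * exp (-(α * s))) := by field_simp

section MatrixKernels

variable {ι κ : Type*}

noncomputable def expTrigPoly (α β : ℝ) (p q : ℕ → Matrix ι κ ℝ) (k : ℕ) (τ : ℝ) :
    Matrix ι κ ℝ :=
  exp (α * τ) • (cos (β * τ) • (∑ m ∈ Finset.range k, τ ^ m • p m) +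
    sin (β * τ) • (∑ m ∈ Finset.range k, τ ^ m • q m))

noncomputable def expTrigMonomial (α β : ℝ) (P Q : Matrix ι κ ℝ) (k : ℕ) (τ : ℝ) :
    Matrix ι κ ℝ :=
  exp (α * τ) • τ ^ k • (cos (β * τ) • P + sin (β * τ) • Q)

theorem expTrigPoly_succ (α β : ℝ) (p q : ℕ → Matrix ι κ ℝ) (k : ℕ) (τ : ℝ) :
    expTrigPoly α β p q (k + 1) τ =
      expTrigPoly α β p q k τ + expTrigMonomial α β (p k) (q k) k τ := by
  simp only [expTrigPoly, expTrigMonomial, Finset.sum_range_succ]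
  module

theorem continuous_expTrigPoly (α β : ℝ) (p q : ℕ → Matrix ι κ ℝ) (k : ℕ) :
    Continuous (expTrigPoly α β p q k) := by
  unfold expTrigPoly
  fun_prop

@[fun_prop]
theorem continuous_expTrigMonomial (α β : ℝ) (P Q : Matrix ι κ ℝ) (k : ℕ) :
    Continuous (expTrigMonomial α β P Q k) := by
  unfold expTrigMonomial
  fun_prop

variable [Fintype κ]

theorem inv_smul_expTrigMonomial_sub_mulVec (α β : ℝ) (P Q : Matrix ι κ ℝ) (n : ℕ) {t : ℝ}
    (ht : t ≠ 0) (s : ℝ) (v : κ → ℝ) :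
    (t ^ n * exp (α * t))⁻¹ • (expTrigMonomial α β P Q n (t - s) *ᵥ v) =
      sin (β * t) • ((t - s) / t) ^ n •
          (exp (-(α * s)) • ((sin (β * s) • P + cos (β * s) • Q) *ᵥ v)) +
        cos (β * t) • ((t - s) / t) ^ n •
          (exp (-(α * s)) • ((cos (β * s) • P - sin (β * s) • Q) *ᵥ v)) := by
  rw [expTrigMonomial, mul_sub, mul_sub, exp_sub, cos_sub, sin_sub, div_pow, exp_neg]
  simp only [add_mulVec, sub_mulVec, smul_mulVec]
  match_scalars <;> field_simp <;> ring

variable [Fintype ι]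

theorem norm_expTrigPoly_le (α β : ℝ) (p q : ℕ → Matrix ι κ ℝ) (k : ℕ) {τ : ℝ} (hτ : 0 ≤ τ) :
    ‖expTrigPoly α β p q k τ‖ ≤
      (∑ m ∈ Finset.range k, (‖p m‖ + ‖q m‖)) * (1 + τ) ^ (k - 1) * exp (α * τ) := by
  have hpoly : ∀ c : ℕ → Matrix ι κ ℝ, ‖∑ m ∈ Finset.range k, τ ^ m • c m‖ ≤
      ∑ m ∈ Finset.range k, (1 + τ) ^ (k - 1) * ‖c m‖ := by
    intro c
    refine (norm_sum_le _ _).trans (Finset.sum_le_sum fun m hm => ?_)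
    rw [norm_smul, Real.norm_of_nonneg (by positivity)]
    gcongr
    calc τ ^ m ≤ (1 + τ) ^ m := by gcongr; linarith
      _ ≤ (1 + τ) ^ (k - 1) := pow_le_pow_right₀ (by linarith) (by grind)
  rw [expTrigPoly, norm_smul, Real.norm_of_nonneg (exp_pos _).le, mul_comm]
  gcongr
  refine (norm_smul_add_smul_le_of_abs_le_one (abs_cos_le_one _) (abs_sin_le_one _) _ _).trans ?_
  refine (add_le_add (hpoly p) (hpoly q)).trans_eq ?_
  rw [← Finset.sum_add_distrib, Finset.sum_mul]
  exact Finset.sum_congr rfl fun m _ => by ring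

noncomputable def causalConv (K : ℝ → Matrix ι κ ℝ) (f : ℝ → κ → ℝ) (t : ℝ) : ι → ℝ :=
  ∫ s in Icc 0 t, K (t - s) *ᵥ f s

theorem causalConv_eq_sum_add {σ : Type*} (S : Finset σ) {K R : ℝ → Matrix ι κ ℝ}
    {L : σ → ℝ → Matrix ι κ ℝ} {f : ℝ → κ → ℝ} {t : ℝ}
    (hK : ∀ τ ≥ 0, K τ = ∑ i ∈ S, L i τ + R τ)
    (hL : ∀ i ∈ S, IntegrableOn (fun s => L i (t - s) *ᵥ f s) (Icc 0 t))
    (hR : IntegrableOn (fun s => R (t - s) *ᵥ f s) (Icc 0 t)) :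
    causalConv K f t = ∑ i ∈ S, causalConv (L i) f t + causalConv R f t := by
  unfold causalConv
  rw [← integral_finsetSum S hL, ← integral_add (integrable_finsetSum S hL) hR]
  refine setIntegral_congr_fun measurableSet_Icc fun s hs => ?_
  simp only [hK (t - s) (sub_nonneg.2 hs.2), add_mulVec, sum_mulVec]

theorem integrableOn_Icc_mulVec_sub_of_norm_le {K : ℝ → Matrix ι κ ℝ} {B : ℝ → ℝ}
    {f : ℝ → κ → ℝ} (hKmeas : ∀ i k, Measurable fun τ => K τ i k) (hB : Continuous B)
    (hKB : ∀ τ ≥ 0, ‖K τ‖ ≤ B τ) (hf : Continuous f) (t : ℝ) :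
    IntegrableOn (fun s => K (t - s) *ᵥ f s) (Icc 0 t) := by
  have hmeas : Measurable fun s => K (t - s) *ᵥ f s := by
    refine measurable_pi_lambda _ fun i => Finset.measurable_sum _ fun k _ => ?_
    exact ((hKmeas i k).comp (measurable_const.sub measurable_id)).mul
      ((continuous_apply k).comp hf).measurable
  refine Integrable.mono' (g := fun s => B (t - s) * ‖WithLp.toLp 2 (f s)‖)
    (by fun_prop : Continuous _).integrableOn_Icc hmeas.aestronglyMeasurable ?_
  refine (ae_restrict_iff' measurableSet_Icc).2 (.of_forall fun s hs => ?_)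
  exact (norm_mulVec_le_frobenius _ _).trans
    (mul_le_mul_of_nonneg_right (hKB _ (sub_nonneg.2 hs.2)) (norm_nonneg _))

theorem integrableOn_exp_smul_mulVec {α C : ℝ} {A : ℝ → Matrix ι κ ℝ} {f : ℝ → κ → ℝ}
    (hA : Continuous A) (hAC : ∀ s, ‖A s‖ ≤ C) (hf : Continuous f)
    (hfint : IntegrableOn (fun s => exp (-(α * s)) * ‖WithLp.toLp 2 (f s)‖) (Ici 0)) :
    IntegrableOn (fun s => exp (-(α * s)) • (A s *ᵥ f s)) (Ici 0) := by
  refine Integrable.mono' (hfint.const_mul C) (by fun_prop : Continuous _).aestronglyMeasurable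
    (.of_forall fun s => ?_)
  rw [norm_smul, Real.norm_of_nonneg (exp_pos _).le, mul_left_comm]
  exact mul_le_mul_of_nonneg_left ((norm_mulVec_le_frobenius _ _).trans
    (mul_le_mul_of_nonneg_right (hAC s) (norm_nonneg _))) (exp_pos _).le

theorem tendsto_inv_smul_causalConv_of_norm_le {n : ℕ} (hn : 1 ≤ n) {α M : ℝ}
    {K : ℝ → Matrix ι κ ℝ} {f : ℝ → κ → ℝ}
    (hK : ∀ τ ≥ 0, ‖K τ‖ ≤ M * (1 + τ) ^ (n - 1) * exp (α * τ))
    (hfint : IntegrableOn (fun s => exp (-(α * s)) * ‖WithLp.toLp 2 (f s)‖) (Ici 0)) :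
    Tendsto (fun t => (t ^ n * exp (α * t))⁻¹ • causalConv K f t) atTop (𝓝 0) := by
  have hM : 0 ≤ M := by simpa using (norm_nonneg _).trans (hK 0 le_rfl)
  simp_rw [causalConv, ← integral_smul]
  refine tendsto_setIntegral_Icc_of_norm_le_inv_mul (hfint.const_mul (M * 2 ^ (n - 1)))
    (fun s => by positivity) ?_
  filter_upwards [eventually_ge_atTop 1] with t ht s hs
  have hKs := hK (t - s) (sub_nonneg.2 hs.2)
  rw [norm_smul, norm_inv, Real.norm_of_nonneg (by positivity)]
  calc (t ^ n * exp (α * t))⁻¹ * ‖K (t - s) *ᵥ f s‖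
      ≤ (t ^ n * exp (α * t))⁻¹ *
          (M * (1 + (t - s)) ^ (n - 1) * exp (α * (t - s)) * ‖WithLp.toLp 2 (f s)‖) := by
        gcongr
        exact (norm_mulVec_le_frobenius _ _).trans (by gcongr)
    _ ≤ t⁻¹ * (M * 2 ^ (n - 1) * exp (-(α * s))) * ‖WithLp.toLp 2 (f s)‖ := by
        rw [← mul_assoc]
        exact mul_le_mul_of_nonneg_right (inv_mul_growth_le hn hM ht hs) (norm_nonneg _)
    _ = t⁻¹ * (M * 2 ^ (n - 1) * (exp (-(α * s)) * ‖WithLp.toLp 2 (f s)‖)) := by ring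

theorem tendsto_inv_smul_causalConv_expTrigMonomial (α β : ℝ) (P Q : Matrix ι κ ℝ) (n : ℕ)
    {f : ℝ → κ → ℝ} (hf : Continuous f)
    (hfint : IntegrableOn (fun s => exp (-(α * s)) * ‖WithLp.toLp 2 (f s)‖) (Ici 0)) :
    Tendsto (fun t => (t ^ n * exp (α * t))⁻¹ • causalConv (expTrigMonomial α β P Q n) f t -
        (sin (β * t) •
            (∫ s in Ici 0, exp (-(α * s)) • ((sin (β * s) • P + cos (β * s) • Q) *ᵥ f s)) +
          cos (β * t) •
            ∫ s in Ici 0, exp (-(α * s)) • ((cos (β * s) • P - sin (β * s) • Q) *ᵥ f s)))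
      atTop (𝓝 0) := by
  set v₁ := fun s => exp (-(α * s)) • ((sin (β * s) • P + cos (β * s) • Q) *ᵥ f s)
  set v₂ := fun s => exp (-(α * s)) • ((cos (β * s) • P - sin (β * s) • Q) *ᵥ f s)
  have hv₁ : IntegrableOn v₁ (Ici 0) := integrableOn_exp_smul_mulVec (by fun_prop)
    (fun s => norm_smul_add_smul_le_of_abs_le_one (abs_sin_le_one _) (abs_cos_le_one _) _ _)
    hf hfint
  have hv₂ : IntegrableOn v₂ (Ici 0) := by
    refine integrableOn_exp_smul_mulVec (C := ‖P‖ + ‖Q‖) (by fun_prop) (fun s => ?_) hf hfint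
    rw [sub_eq_add_neg, ← neg_smul]
    exact norm_smul_add_smul_le_of_abs_le_one (abs_cos_le_one _)
      (by simpa using abs_sin_le_one _) _ _
  have hsplit : ∀ t ≠ 0, (t ^ n * exp (α * t))⁻¹ • causalConv (expTrigMonomial α β P Q n) f t =
      sin (β * t) • (∫ s in Icc 0 t, ((t - s) / t) ^ n • v₁ s) +
        cos (β * t) • ∫ s in Icc 0 t, ((t - s) / t) ^ n • v₂ s := by
    intro t ht
    rw [causalConv, ← integral_smul, ← integral_smul, ← integral_smul,
      ← integral_add (by fun_prop : Continuous _).integrableOn_Icc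
        (by fun_prop : Continuous _).integrableOn_Icc]
    simp only [inv_smul_expTrigMonomial_sub_mulVec α β P Q n ht, v₁, v₂]
  have hbdd : ∀ c : ℝ → ℝ, (∀ t, |c t| ≤ 1) → IsBoundedUnder (· ≤ ·) atTop (norm ∘ c) :=
    fun c hc => isBoundedUnder_of ⟨1, hc⟩
  have hlim := ((hbdd _ fun t => abs_sin_le_one (β * t)).smul_tendsto_zero
      (tendsto_sub_nhds_zero_iff.2 (tendsto_setIntegral_Icc_pow_sub_div_smul n hv₁))).add
    ((hbdd _ fun t => abs_cos_le_one (β * t)).smul_tendsto_zero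
      (tendsto_sub_nhds_zero_iff.2 (tendsto_setIntegral_Icc_pow_sub_div_smul n hv₂)))
  rw [add_zero] at hlim
  refine hlim.congr' ?_
  filter_upwards [eventually_ne_atTop 0] with t ht
  rw [hsplit t ht, smul_sub, smul_sub]
  abel

end MatrixKernels

theorem stmt9_general (d : ℕ) (α : ℝ) (n : ℕ) (hn : 1 ≤ n) (N : ℕ)
    (β : Fin N → ℝ)
    (Pc Qc : Fin N → ℕ → Matrix (Fin d) (Fin d) ℝ)
    (Pstar Qstar : Fin N → Matrix (Fin d) (Fin d) ℝ)
    (hPlead : ∀ j, Pc j n = Pstar j) (hQlead : ∀ j, Qc j n = Qstar j)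
    (r Rr : ℝ → Matrix (Fin d) (Fin d) ℝ)
    (hRmeas : ∀ i k, Measurable fun t => Rr t i k)
    (M : ℝ)
    (hRbd : ∀ t ≥ (0 : ℝ), frob (Rr t) ≤ M * (1 + t) ^ (n - 1) * Real.exp (α * t))
    (hreq : ∀ t ≥ (0 : ℝ), r t =
      (∑ j, Real.exp (α * t) •
        (Real.cos (β j * t) • (∑ m ∈ Finset.range (n + 1), t ^ m • Pc j m) +
         Real.sin (β j * t) • (∑ m ∈ Finset.range (n + 1), t ^ m • Qc j m))) + Rr t)
    (f : ℝ → Fin d → ℝ) (hf : Continuous f)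
    (hfint : IntegrableOn (fun t => Real.exp (-(α * t)) * eNorm (f t)) (Ici 0)) :
    Tendsto (fun t : ℝ =>
      ((t ^ n * Real.exp (α * t))⁻¹ • ∫ s in Icc (0 : ℝ) t, (r (t - s)).mulVec (f s)) -
        ∑ j,
          (Real.sin (β j * t) •
            (∫ s in Ici (0 : ℝ), Real.exp (-(α * s)) •
              ((Real.sin (β j * s) • Pstar j + Real.cos (β j * s) • Qstar j).mulVec (f s))) +
           Real.cos (β j * t) •
            (∫ s in Ici (0 : ℝ), Real.exp (-(α * s)) •
              ((Real.cos (β j * s) • Pstar j - Real.sin (β j * s) • Qstar j).mulVec (f s)))))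
      atTop (nhds 0) := by
  set R := fun τ => Rr τ + ∑ j, expTrigPoly α (β j) (Pc j) (Qc j) n τ
  set C := M + ∑ j, ∑ m ∈ Finset.range n, (‖Pc j m‖ + ‖Qc j m‖)
  have hr : ∀ τ ≥ 0, r τ = ∑ j, expTrigMonomial α (β j) (Pstar j) (Qstar j) n τ + R τ := by
    intro τ hτ
    rw [hreq τ hτ]
    change ∑ j, expTrigPoly α (β j) (Pc j) (Qc j) (n + 1) τ + Rr τ = _
    simp only [expTrigPoly_succ, hPlead, hQlead, Finset.sum_add_distrib, R]
    abel
  have hRbd' : ∀ τ ≥ 0, ‖R τ‖ ≤ C * (1 + τ) ^ (n - 1) * exp (α * τ) := by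
    intro τ hτ
    refine (norm_add_le _ _).trans ((add_le_add (frob_eq_norm (Rr τ) ▸ hRbd τ hτ)
      ((norm_sum_le _ _).trans (Finset.sum_le_sum fun j _ =>
        norm_expTrigPoly_le α (β j) (Pc j) (Qc j) n hτ))).trans_eq ?_)
    simp only [C, ← Finset.sum_mul]
    ring
  have hRmeas' : ∀ i k, Measurable fun τ => R τ i k := fun i k => by
    simp only [R, Matrix.add_apply, Matrix.sum_apply]
    exact (hRmeas i k).add (Finset.measurable_sum _ fun j _ =>
      ((continuous_expTrigPoly α (β j) (Pc j) (Qc j) n).matrix_elem i k).measurable)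
  have hfint' : IntegrableOn (fun s => exp (-(α * s)) * ‖WithLp.toLp 2 (f s)‖) (Ici 0) := by
    simpa only [eNorm_eq_norm] using hfint
  have hconv (t : ℝ) : causalConv r f t =
      ∑ j, causalConv (expTrigMonomial α (β j) (Pstar j) (Qstar j) n) f t + causalConv R f t :=
    causalConv_eq_sum_add _ hr (fun j _ => (by fun_prop : Continuous _).integrableOn_Icc)
      (integrableOn_Icc_mulVec_sub_of_norm_le hRmeas' (by fun_prop) hRbd' hf t)
  have hlim := (tendsto_finsetSum Finset.univ fun j _ =>
      tendsto_inv_smul_causalConv_expTrigMonomial α (β j) (Pstar j) (Qstar j) n hf hfint').add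
    (tendsto_inv_smul_causalConv_of_norm_le hn hRbd' hfint')
  rw [Finset.sum_const_zero, add_zero] at hlim
  refine hlim.congr fun t => ?_
  change _ = (t ^ n * exp (α * t))⁻¹ • causalConv r f t - _
  rw [hconv, smul_add, Finset.smul_sum, Finset.sum_sub_distrib]
  abel

/-- deterministic convolution asymptotics, case `n ≥ 1`.
If `r(t) = Σ_j e^{αt}{P_j(t)cos(β_j t) + Q_j(t)sin(β_j t)} + R(t)`, where `P_j, Q_j` are
matrix polynomials of degree `n` with leading coefficients `P_j^*, Q_j^*`
(encoded via their coefficient matrices `Pc j m`, `Qc j m`, `0 ≤ m ≤ n`) and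
`‖R(t)‖ ≤ M(1+t)^{n−1}e^{αt}`, and if `f` is continuous with `∫₀^∞ e^{−αt}|f(t)|dt < ∞`,
then `(1/(t^n e^{αt})) ∫₀^t r(t−s)f(s)ds − Σ_j {D_{1,j} sin(β_j t) + D_{2,j} cos(β_j t)} → 0`. -/
theorem stmt9 (d : ℕ) (α : ℝ) (n : ℕ) (hn : 1 ≤ n) (N : ℕ) (hN : 1 ≤ N)
    (β : Fin N → ℝ)
    (Pc Qc : Fin N → ℕ → Matrix (Fin d) (Fin d) ℝ)
    (Pstar Qstar : Fin N → Matrix (Fin d) (Fin d) ℝ)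
    (hPlead : ∀ j, Pc j n = Pstar j) (hQlead : ∀ j, Qc j n = Qstar j)
    (r Rr : ℝ → Matrix (Fin d) (Fin d) ℝ)
    (hRmeas : ∀ i k, Measurable fun t => Rr t i k)
    (M : ℝ) (hM : 0 < M)
    (hRbd : ∀ t ≥ (0 : ℝ), frob (Rr t) ≤ M * (1 + t) ^ (n - 1) * Real.exp (α * t))
    (hreq : ∀ t ≥ (0 : ℝ), r t =
      (∑ j, Real.exp (α * t) •
        (Real.cos (β j * t) • (∑ m ∈ Finset.range (n + 1), t ^ m • Pc j m) +
         Real.sin (β j * t) • (∑ m ∈ Finset.range (n + 1), t ^ m • Qc j m))) + Rr t)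
    (f : ℝ → Fin d → ℝ) (hf : Continuous f)
    (hfint : IntegrableOn (fun t => Real.exp (-(α * t)) * eNorm (f t)) (Ici 0)) :
    Tendsto (fun t : ℝ =>
      ((t ^ n * Real.exp (α * t))⁻¹ • ∫ s in Icc (0 : ℝ) t, (r (t - s)).mulVec (f s)) -
        ∑ j,
          (Real.sin (β j * t) •
            (∫ s in Ici (0 : ℝ), Real.exp (-(α * s)) •
              ((Real.sin (β j * s) • Pstar j + Real.cos (β j * s) • Qstar j).mulVec (f s))) +
           Real.cos (β j * t) •
            (∫ s in Ici (0 : ℝ), Real.exp (-(α * s)) •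
              ((Real.cos (β j * s) • Pstar j - Real.sin (β j * s) • Qstar j).mulVec (f s)))))
      atTop (nhds 0) :=
  stmt9_general d α n hn N β Pc Qc Pstar Qstar hPlead hQlead r Rr hRmeas M hRbd hreq f hf hfint
end

section
/- Let α ∈ ℝ, let n ≥ 1 be an integer, let R : [0,∞) → ℝ^{d×d} be measurable with ‖R(t)‖ ≤ M (1+t)^{n−1} e^{α t} for all t ≥ 0 and some M > 0, and let Σ : [0,∞) → ℝ^{d×d'} be continuous with ∫₀^∞ e^{−2α s} ‖Σ(s)‖² ds < ∞. Then lim_{t→∞} (log t) · (1 / (t^{2n} e^{2α t})) ∫₀^t ‖R(t−s) Σ(s)‖² ds = 0. In fact, there is a constant C > 0 such that (1 / (t^{2n} e^{2α t})) ∫₀^t ‖R(t−s)Σ(s)‖² ds ≤ C / (1+t)² for all t ≥ 1. -/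
open MeasureTheory Set Filter Matrix

lemma frob_sq {d e : ℕ} (A : Matrix (Fin d) (Fin e) ℝ) :
    frob A ^ 2 = ∑ i, ∑ j, (A i j) ^ 2 :=
  Real.sq_sqrt (Finset.sum_nonneg fun _ _ => Finset.sum_nonneg fun _ _ => sq_nonneg _)

lemma frob_mul_le {d e f : ℕ} (A : Matrix (Fin d) (Fin e) ℝ) (B : Matrix (Fin e) (Fin f) ℝ) :
    frob (A * B) ≤ frob A * frob B := by
  have h2 : frob (A * B) ^ 2 ≤ (frob A * frob B) ^ 2 := by
    rw [frob_sq, mul_pow, frob_sq, frob_sq]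
    calc ∑ i, ∑ j, ((A * B) i j) ^ 2
        ≤ ∑ i, ∑ j, (∑ k, (A i k) ^ 2) * (∑ k, (B k j) ^ 2) := by
          refine Finset.sum_le_sum fun i _ => Finset.sum_le_sum fun j _ => ?_
          simpa [Matrix.mul_apply] using
            Finset.sum_mul_sq_le_sq_mul_sq Finset.univ (fun k => A i k) (fun k => B k j)
      _ = (∑ i, ∑ k, (A i k) ^ 2) * (∑ i, ∑ j, (B i j) ^ 2) := by
          rw [Finset.sum_mul]
          refine Finset.sum_congr rfl fun i _ => ?_
          rw [← Finset.mul_sum]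
          congr 1
          exact Finset.sum_comm
  exact (pow_le_pow_iff_left₀ (frob_nonneg _)
    (mul_nonneg (frob_nonneg _) (frob_nonneg _)) two_ne_zero).mp h2

/-- kernel decay estimate for the remainder kernel
`H(t,s) = R(t−s)Σ(s)/(t^n e^{αt})`: the squared `L²`-norm in `s` tends to zero even when
multiplied by `log t`, and in fact is `O(1/(1+t)²)` for `t ≥ 1`. -/
theorem stmt11 (d d' : ℕ) (α : ℝ) (n : ℕ) (hn : 1 ≤ n)
    (R : ℝ → Matrix (Fin d) (Fin d) ℝ)
    (hRmeas : ∀ i k, Measurable fun t => R t i k)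
    (M : ℝ) (hM : 0 < M)
    (hRbd : ∀ t ≥ (0 : ℝ), frob (R t) ≤ M * (1 + t) ^ (n - 1) * Real.exp (α * t))
    (Sig : ℝ → Matrix (Fin d) (Fin d') ℝ)
    (hSig : ∀ i k, Continuous fun t => Sig t i k)
    (hSigint : IntegrableOn
      (fun s => Real.exp (-(2 * α * s)) * frob (Sig s) ^ 2) (Ici 0)) :
    Tendsto (fun t : ℝ => Real.log t *
        ((t ^ (2 * n) * Real.exp (2 * α * t))⁻¹ *
          ∫ s in Icc (0 : ℝ) t, frob (R (t - s) * Sig s) ^ 2))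
      atTop (nhds 0) ∧
    ∃ C > (0 : ℝ), ∀ t ≥ (1 : ℝ),
      (t ^ (2 * n) * Real.exp (2 * α * t))⁻¹ *
          ∫ s in Icc (0 : ℝ) t, frob (R (t - s) * Sig s) ^ 2
        ≤ C / (1 + t) ^ 2 := by
  set I : ℝ := ∫ s in Ici (0 : ℝ), Real.exp (-(2 * α * s)) * frob (Sig s) ^ 2 with hIdef
  have hSignn : ∀ s : ℝ, 0 ≤ Real.exp (-(2 * α * s)) * frob (Sig s) ^ 2 := fun s =>
    mul_nonneg (Real.exp_pos _).le (sq_nonneg _)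
  have hI0 : 0 ≤ I := setIntegral_nonneg measurableSet_Ici fun s _ => hSignn s
  set C : ℝ := 2 ^ (2 * n) * M ^ 2 * (I + 1) with hCdef
  have hC : 0 < C := by positivity
  set F : ℝ → ℝ := fun t =>
    (t ^ (2 * n) * Real.exp (2 * α * t))⁻¹ *
      ∫ s in Icc (0 : ℝ) t, frob (R (t - s) * Sig s) ^ 2 with hFdef
  have hFnn : ∀ t : ℝ, 0 ≤ t → 0 ≤ F t := by
    intro t ht
    apply mul_nonneg
    · positivity
    · exact setIntegral_nonneg measurableSet_Icc fun s _ => sq_nonneg _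
  -- key bound
  have key : ∀ t ≥ (1 : ℝ), F t ≤ C / (1 + t) ^ 2 := by
    intro t ht
    have ht0 : (0 : ℝ) < t := lt_of_lt_of_le one_pos ht
    set J : ℝ := ∫ s in Icc (0 : ℝ) t, Real.exp (-(2 * α * s)) * frob (Sig s) ^ 2 with hJdef
    have hJint : IntegrableOn (fun s => Real.exp (-(2 * α * s)) * frob (Sig s) ^ 2)
        (Icc (0 : ℝ) t) := hSigint.mono_set Icc_subset_Ici_self
    have hJI : J ≤ I := by
      refine setIntegral_mono_set hSigint ?_ (HasSubset.Subset.eventuallyLE Icc_subset_Ici_self)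
      exact Eventually.of_forall fun s => hSignn s
    have hJ0 : 0 ≤ J := setIntegral_nonneg measurableSet_Icc fun s _ => hSignn s
    -- pointwise bound inside the integral
    have hpt : ∀ s ∈ Icc (0 : ℝ) t,
        frob (R (t - s) * Sig s) ^ 2 ≤
          M ^ 2 * (1 + t) ^ (2 * (n - 1)) * Real.exp (2 * α * t) *
            (Real.exp (-(2 * α * s)) * frob (Sig s) ^ 2) := by
      intro s hs
      obtain ⟨hs0, hst⟩ := hs
      have hts : (0 : ℝ) ≤ t - s := by linarith
      have h1 : frob (R (t - s) * Sig s) ≤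
          (M * (1 + (t - s)) ^ (n - 1) * Real.exp (α * (t - s))) * frob (Sig s) := by
        refine (frob_mul_le _ _).trans ?_
        exact mul_le_mul_of_nonneg_right (hRbd _ hts) (frob_nonneg _)
      have h2 : frob (R (t - s) * Sig s) ^ 2 ≤
          ((M * (1 + (t - s)) ^ (n - 1) * Real.exp (α * (t - s))) * frob (Sig s)) ^ 2 := by
        apply pow_le_pow_left₀ (frob_nonneg _) h1
      refine h2.trans ?_
      have hpow : (1 + (t - s)) ^ (n - 1) ≤ (1 + t) ^ (n - 1) :=
        pow_le_pow_left₀ (by linarith) (by linarith) _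
      have hexp : Real.exp (α * (t - s)) ^ 2 =
          Real.exp (2 * α * t) * Real.exp (-(2 * α * s)) := by
        rw [sq, ← Real.exp_add, ← Real.exp_add]
        ring_nf
      have hb : ((M * (1 + (t - s)) ^ (n - 1) * Real.exp (α * (t - s))) * frob (Sig s)) ^ 2
          = M ^ 2 * ((1 + (t - s)) ^ (n - 1)) ^ 2 *
              (Real.exp (2 * α * t) * Real.exp (-(2 * α * s))) * frob (Sig s) ^ 2 := by
        rw [← hexp]; ring
      rw [hb]
      have hpow2 : ((1 + (t - s)) ^ (n - 1)) ^ 2 ≤ (1 + t) ^ (2 * (n - 1)) := by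
        rw [show 2 * (n - 1) = (n - 1) * 2 by ring, pow_mul]
        exact pow_le_pow_left₀ (by positivity) hpow 2
      calc M ^ 2 * ((1 + (t - s)) ^ (n - 1)) ^ 2 *
              (Real.exp (2 * α * t) * Real.exp (-(2 * α * s))) * frob (Sig s) ^ 2
          ≤ M ^ 2 * (1 + t) ^ (2 * (n - 1)) *
              (Real.exp (2 * α * t) * Real.exp (-(2 * α * s))) * frob (Sig s) ^ 2 := by
            gcongr
        _ = M ^ 2 * (1 + t) ^ (2 * (n - 1)) * Real.exp (2 * α * t) *
              (Real.exp (-(2 * α * s)) * frob (Sig s) ^ 2) := by ring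
    -- integral bound
    have hint : (∫ s in Icc (0 : ℝ) t, frob (R (t - s) * Sig s) ^ 2) ≤
        M ^ 2 * (1 + t) ^ (2 * (n - 1)) * Real.exp (2 * α * t) * J := by
      rw [hJdef, ← integral_const_mul]
      refine integral_mono_of_nonneg ?_ (hJint.const_mul _) ?_
      · exact Eventually.of_forall fun s => sq_nonneg _
      · rw [EventuallyLE, ae_restrict_iff' measurableSet_Icc]
        exact Eventually.of_forall fun s hs => hpt s hs
    -- put everything together
    have hF1 : F t ≤ (t ^ (2 * n) * Real.exp (2 * α * t))⁻¹ *
        (M ^ 2 * (1 + t) ^ (2 * (n - 1)) * Real.exp (2 * α * t) * J) :=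
      mul_le_mul_of_nonneg_left hint (by positivity)
    refine hF1.trans ?_
    have hEq : (t ^ (2 * n) * Real.exp (2 * α * t))⁻¹ *
        (M ^ 2 * (1 + t) ^ (2 * (n - 1)) * Real.exp (2 * α * t) * J)
        = M ^ 2 * (1 + t) ^ (2 * (n - 1)) * J / t ^ (2 * n) := by
      rw [mul_inv]
      field_simp
    rw [hEq, div_le_div_iff₀ (by positivity) (by positivity)]
    have hsum : (1 + t) ^ (2 * (n - 1)) * (1 + t) ^ 2 = (1 + t) ^ (2 * n) := by
      rw [← pow_add]
      congr 1
      omega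
    calc M ^ 2 * (1 + t) ^ (2 * (n - 1)) * J * (1 + t) ^ 2
        = M ^ 2 * J * ((1 + t) ^ (2 * (n - 1)) * (1 + t) ^ 2) := by ring
      _ = M ^ 2 * J * (1 + t) ^ (2 * n) := by rw [hsum]
      _ ≤ M ^ 2 * (I + 1) * (2 ^ (2 * n) * t ^ (2 * n)) := by
          have h1t : (1 + t) ^ (2 * n) ≤ 2 ^ (2 * n) * t ^ (2 * n) := by
            rw [← mul_pow]
            exact pow_le_pow_left₀ (by linarith) (by linarith) _
          have hJ1 : J ≤ I + 1 := by linarith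
          exact mul_le_mul (mul_le_mul_of_nonneg_left hJ1 (by positivity)) h1t
            (by positivity) (by positivity)
      _ = C * t ^ (2 * n) := by rw [hCdef]; ring
  refine ⟨?_, ⟨C, hC, key⟩⟩
  -- the limit
  have hCt : Tendsto (fun t : ℝ => C / t) atTop (nhds 0) :=
    tendsto_const_nhds.div_atTop tendsto_id
  refine tendsto_of_tendsto_of_tendsto_of_le_of_le' tendsto_const_nhds hCt ?_ ?_
  · filter_upwards [eventually_ge_atTop (1 : ℝ)] with t ht
    exact mul_nonneg (Real.log_nonneg ht) (hFnn t (by linarith))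
  · filter_upwards [eventually_ge_atTop (1 : ℝ)] with t ht
    have ht0 : (0 : ℝ) < t := lt_of_lt_of_le one_pos ht
    have hlog : Real.log t ≤ t := by
      have := Real.log_le_sub_one_of_pos ht0
      linarith
    have hF2 : F t ≤ C / t ^ 2 := by
      refine (key t ht).trans ?_
      exact div_le_div_of_nonneg_left hC.le (by positivity) (by nlinarith)
    calc Real.log t * F t ≤ t * (C / t ^ 2) :=
          mul_le_mul hlog hF2 (hFnn t ht0.le) ht0.le
      _ = C / t := by
          field_simp
end
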